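/- Let K be an infinite field. The image of any multilinear polynomial f(x₁,…,xₙ) = Σ_{σ ∈ Sₙ} α_σ x_{σ(1)}⋯x_{σ(n)} on the algebra UT₃(K) of 3×3 upper triangular matrices is exactly one of: {0}, J², J, or UT₃(K), where J is the set of strictly upper triangular 3×3 matrices. -/

import Mathlib

/-!
Write `c = ∑_σ α_σ`. If `c ≠ 0`, putting `X / c` in one slot and `1` in all others gives every
`X ∈ UT₃`. If `c = 0`, split every argument as `aᵢ = Δᵢ + Nᵢ` (diagonal plus strictly upper) and
expand multilinearly: the term with only diagonal arguments is `c • ∏ Δᵢ = 0`, a term with at least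
two `Nᵢ` lies in `J²`, and a term with exactly one `N_k` is the matrix
`(N_k p q · ψ_k(Δ·p, Δ·q))_{p q}` for an explicit polynomial `ψ_k` in the diagonal entries.
So the image is contained in `J`, and even in `J²` if all `ψ_k` vanish; in that case it is `{0}` or
the line `J²`, being closed under scalars. Otherwise some `ψ_k` is a nonzero polynomial, so over an
infinite field the three values `ψ_k(d, e)`, `ψ_k(e, g)`, `ψ_k(d, g)` are simultaneously nonzero
for suitable `d, e, g`, and dividing the entries of a target in `J` by them shows that the image
is all of `J`.
-/

open Matrix

/-- Upper triangular n×n matrices (as a set). -/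
def UTset (n : ℕ) (K : Type*) [Ring K] : Set (Matrix (Fin n) (Fin n) K) :=
  {A | ∀ i j : Fin n, j < i → A i j = 0}

/-- The k-th power Jᵏ of the strictly upper triangular ideal:
matrices whose (i,j) entry vanishes unless j ≥ i + k. -/
def Jset (n : ℕ) (K : Type*) [Ring K] (k : ℕ) : Set (Matrix (Fin n) (Fin n) K) :=
  {A | ∀ i j : Fin n, (j : ℕ) < (i : ℕ) + k → A i j = 0}

/-- Evaluation of the multilinear polynomial ∑_σ α_σ x_{σ(1)}⋯x_{σ(n)}. -/
def mlEval {K A : Type*} [CommSemiring K] [Ring A] [Algebra K A] {n : ℕ}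
    (α : Equiv.Perm (Fin n) → K) (a : Fin n → A) : A :=
  ∑ σ : Equiv.Perm (Fin n), α σ • (List.ofFn fun i => a (σ i)).prod

/-- Image of a multilinear polynomial on a subset S of an algebra. -/
def mlImage {K A : Type*} [CommSemiring K] [Ring A] [Algebra K A] {n : ℕ}
    (α : Equiv.Perm (Fin n) → K) (S : Set A) : Set A :=
  {x | ∃ a : Fin n → A, (∀ i, a i ∈ S) ∧ x = mlEval α a}


theorem List.prod_ofFn_update {M : Type*} [Monoid M] {n : ℕ} (v : Fin n → M) (j : Fin n) (X : M) :
    (List.ofFn (Function.update v j X)).prod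
      = ((List.ofFn v).take j).prod * X * ((List.ofFn v).drop (j + 1)).prod := by
  simp [List.ofFn_eq_map, (List.nodup_finRange n).map_update, List.prod_set]

theorem forall_update_mem {ι α : Type*} [DecidableEq ι] {S : Set α} {a : ι → α}
    (ha : ∀ i, a i ∈ S) (k : ι) {x : α} (hx : x ∈ S) : ∀ i, Function.update a k x i ∈ S :=
  (Function.forall_update_iff a fun _ y => y ∈ S).2 ⟨hx, fun i _ => ha i⟩

def mlEvalMultilinear {K A : Type*} [CommSemiring K] [Ring A] [Algebra K A] {n : ℕ}
    (α : Equiv.Perm (Fin n) → K) : MultilinearMap K (fun _ : Fin n => A) A :=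
  ∑ σ, α σ • (MultilinearMap.mkPiAlgebraFin K n A).domDomCongr σ

theorem mlEvalMultilinear_apply {K A : Type*} [CommSemiring K] [Ring A] [Algebra K A] {n : ℕ}
    (α : Equiv.Perm (Fin n) → K) (a : Fin n → A) : mlEvalMultilinear α a = mlEval α a := by
  simp [mlEvalMultilinear, mlEval]

section Psi

variable {K R : Type*} [CommSemiring K] [CommSemiring R] [Algebra K R] {n : ℕ}

/-- `ψ_k(d, e) = ∑_σ α_σ (∏_{i before k} d i) (∏_{i after k} e i)`, "before" and "after" referring
to the order of the factors in `x_{σ(1)} ⋯ x_{σ(n)}`. -/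
def psi (α : Equiv.Perm (Fin n) → K) (k : Fin n) (d e : Fin n → R) : R :=
  ∑ σ : Equiv.Perm (Fin n), α σ •
    (((List.ofFn (d ∘ σ)).take (σ.symm k)).prod * ((List.ofFn (e ∘ σ)).drop (σ.symm k + 1)).prod)

theorem map_psi {S : Type*} [CommSemiring S] [Algebra K S] (φ : R →ₐ[K] S)
    (α : Equiv.Perm (Fin n) → K) (k : Fin n) (d e : Fin n → R) :
    φ (psi α k d e) = psi α k (φ ∘ d) (φ ∘ e) := by
  simp [psi, map_list_prod, List.map_take, List.map_drop, List.map_ofFn, Function.comp_assoc]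

end Psi

section Jset

variable {R : Type*} [Ring R] {m n : ℕ}

theorem UTset_eq_Jset_zero : UTset m R = Jset m R 0 := by
  ext A
  simp only [UTset, Jset, Set.mem_ofPred_eq, add_zero, Fin.lt_def]

theorem Jset_subset_Jset_of_le {r s : ℕ} (h : r ≤ s) : Jset m R s ⊆ Jset m R r :=
  fun _ hA i j hij => hA i j (by omega)

theorem smul_mem_Jset {A : Matrix (Fin m) (Fin m) R} {r : ℕ} (c : R) (hA : A ∈ Jset m R r) :
    c • A ∈ Jset m R r := fun i j hij => by
  rw [Matrix.smul_apply, hA i j hij, smul_zero]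

theorem diagonal_mem_Jset_zero (d : Fin m → R) : diagonal d ∈ Jset m R 0 :=
  fun i j hij => diagonal_apply_ne _ (by omega)

theorem sub_diagonal_diag_mem_Jset_one {A : Matrix (Fin m) (Fin m) R} (hA : A ∈ UTset m R) :
    A - diagonal (diag A) ∈ Jset m R 1 := by
  intro i j hij
  obtain hlt | rfl : j < i ∨ j = i := by omega
  · rw [Matrix.sub_apply, hA i j hlt, diagonal_apply_ne _ hlt.ne', sub_zero]
  · simp

theorem mul_mem_Jset {A B : Matrix (Fin m) (Fin m) R} {r s : ℕ} (hA : A ∈ Jset m R r)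
    (hB : B ∈ Jset m R s) : A * B ∈ Jset m R (r + s) := by
  intro i j hij
  rw [Matrix.mul_apply]
  refine Finset.sum_eq_zero fun l _ => ?_
  by_cases hl : (l : ℕ) < i + r
  · rw [hA i l hl, zero_mul]
  · rw [hB l j (by omega), mul_zero]

theorem prod_ofFn_mem_Jset {a : Fin n → Matrix (Fin m) (Fin m) R} {w : Fin n → ℕ}
    (h : ∀ i, a i ∈ Jset m R (w i)) : (List.ofFn a).prod ∈ Jset m R (∑ i, w i) := by
  induction n with
  | zero => simpa using diagonal_mem_Jset_zero (fun _ => (1 : R))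
  | succ n ih =>
    rw [List.ofFn_succ, List.prod_cons, Fin.sum_univ_succ]
    exact mul_mem_Jset (h 0) (ih fun i => h i.succ)

theorem smul_mem_UTset {A : Matrix (Fin m) (Fin m) R} (c : R) (hA : A ∈ UTset m R) :
    c • A ∈ UTset m R := by
  rw [UTset_eq_Jset_zero] at hA ⊢
  exact smul_mem_Jset c hA

theorem diagonal_mem_UTset (d : Fin m → R) : diagonal d ∈ UTset m R :=
  UTset_eq_Jset_zero (m := m) (R := R) ▸ diagonal_mem_Jset_zero d

theorem ofFn_diagonal (δ : Fin n → Fin m → R) :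
    List.ofFn (fun i => diagonal (δ i)) = (List.ofFn δ).map diagonal := by
  simp [List.map_ofFn, Function.comp_def]

theorem list_prod_map_diagonal (L : List (Fin m → R)) : (L.map diagonal).prod = diagonal L.prod :=
  (map_list_prod (diagonalRingHom (Fin m) R) L).symm

end Jset

section MatrixEval

variable {K : Type*} [CommRing K] {m n : ℕ}

theorem mlEval_mem_Jset (α : Equiv.Perm (Fin n) → K) {a : Fin n → Matrix (Fin m) (Fin m) K}
    {w : Fin n → ℕ} (h : ∀ i, a i ∈ Jset m K (w i)) : mlEval α a ∈ Jset m K (∑ i, w i) := by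
  intro i j hij
  rw [mlEval, Matrix.sum_apply]
  refine Finset.sum_eq_zero fun σ _ => ?_
  have hσ := prod_ofFn_mem_Jset (a := fun l => a (σ l)) fun l => h (σ l)
  rw [Equiv.sum_comp σ w] at hσ
  rw [Matrix.smul_apply, hσ i j hij, smul_zero]

theorem mlEval_diagonal (α : Equiv.Perm (Fin n) → K) (δ : Fin n → Fin m → K) :
    mlEval α (fun i => diagonal (δ i)) = (∑ σ, α σ) • diagonal (∏ i, δ i) := by
  rw [mlEval, Finset.sum_smul]
  refine Finset.sum_congr rfl fun σ _ => ?_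
  rw [ofFn_diagonal, list_prod_map_diagonal, List.prod_ofFn,
    Equiv.prod_comp σ δ]

theorem mlEval_update_diagonal_apply (α : Equiv.Perm (Fin n) → K) (δ : Fin n → Fin m → K)
    (k : Fin n) (X : Matrix (Fin m) (Fin m) K) (p q : Fin m) :
    mlEval α (Function.update (fun i => diagonal (δ i)) k X) p q
      = X p q * psi α k (fun i => δ i p) (fun i => δ i q) := by
  rw [mlEval, Matrix.sum_apply, psi, Finset.mul_sum]
  refine Finset.sum_congr rfl fun σ _ => ?_
  have hupd := Function.update_comp_equiv (fun i => diagonal (δ i)) σ k X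
  simp only [Function.comp_def] at hupd
  rw [hupd, List.prod_ofFn_update, ofFn_diagonal, ← List.map_take, ← List.map_drop,
    list_prod_map_diagonal, list_prod_map_diagonal, Matrix.smul_apply, mul_diagonal, diagonal_mul,
    Pi.list_prod_apply, Pi.list_prod_apply]
  simp only [List.map_take, List.map_ofFn, Function.comp_def, List.map_drop, smul_eq_mul]
  ring

end MatrixEval

section Image

variable {K : Type*} [CommRing K] {m n : ℕ} (α : Equiv.Perm (Fin n) → K)

theorem mlEval_mem_Jset_of_pieces {a : Fin n → Matrix (Fin m) (Fin m) K}
    (ha : ∀ i, a i ∈ UTset m K) (r : ℕ)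
    (h : ∀ s : Finset (Fin n), s.card < r →
      mlEval α (s.piecewise (fun i => a i - diagonal (diag (a i)))
        (fun i => diagonal (diag (a i)))) = 0) :
    mlEval α a ∈ Jset m K r := by
  have hsplit : a = (fun i => a i - diagonal (diag (a i))) + fun i => diagonal (diag (a i)) := by
    funext i
    simp
  intro i j hij
  rw [hsplit, ← mlEvalMultilinear_apply, MultilinearMap.map_add_univ, Matrix.sum_apply]
  refine Finset.sum_eq_zero fun s _ => ?_
  rw [mlEvalMultilinear_apply]
  by_cases hs : s.card < r
  · rw [h s hs, Matrix.zero_apply]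
  have hpiece : mlEval α (s.piecewise (fun i => a i - diagonal (diag (a i)))
      (fun i => diagonal (diag (a i)))) ∈ Jset m K (∑ i, if i ∈ s then 1 else 0) := by
    refine mlEval_mem_Jset α fun i => ?_
    by_cases hi : i ∈ s
    · simpa [hi] using sub_diagonal_diag_mem_Jset_one (ha i)
    · simpa [hi] using diagonal_mem_Jset_zero (diag (a i))
  simp only [Finset.sum_boole, Finset.filter_mem_eq_inter, Finset.univ_inter] at hpiece
  exact Jset_subset_Jset_of_le (not_lt.1 hs) hpiece i j hij

theorem mlImage_subset_UTset : mlImage α (UTset m K) ⊆ UTset m K := by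
  rintro _ ⟨a, ha, rfl⟩
  rw [UTset_eq_Jset_zero] at ha ⊢
  simpa using mlEval_mem_Jset α (w := 0) ha

theorem mlImage_subset_Jset_one (hc : ∑ σ, α σ = 0) : mlImage α (UTset m K) ⊆ Jset m K 1 := by
  rintro _ ⟨a, ha, rfl⟩
  refine mlEval_mem_Jset_of_pieces α ha 1 fun s hs => ?_
  rw [Finset.card_eq_zero.1 (Nat.lt_one_iff.1 hs), Finset.piecewise_empty, mlEval_diagonal, hc,
    zero_smul]

theorem mlImage_subset_Jset_two (hc : ∑ σ, α σ = 0)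
    (hψ : ∀ (k : Fin n) (d e : Fin n → K), psi α k d e = 0) :
    mlImage α (UTset m K) ⊆ Jset m K 2 := by
  rintro _ ⟨a, ha, rfl⟩
  refine mlEval_mem_Jset_of_pieces α ha 2 fun s hs => ?_
  obtain hs | hs := Nat.lt_succ_iff_lt_or_eq.1 hs
  · rw [Finset.card_eq_zero.1 (Nat.lt_one_iff.1 hs), Finset.piecewise_empty, mlEval_diagonal, hc,
      zero_smul]
  · obtain ⟨k, rfl⟩ := Finset.card_eq_one.1 hs
    ext p q
    rw [Finset.piecewise_singleton, mlEval_update_diagonal_apply, hψ, mul_zero, Matrix.zero_apply]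

end Image

section Field

variable {K : Type*} [Field K] {m n : ℕ} (α : Equiv.Perm (Fin n) → K)

theorem smul_mem_mlImage (hn : 0 < n) {x : Matrix (Fin m) (Fin m) K}
    (hx : x ∈ mlImage α (UTset m K)) (t : K) : t • x ∈ mlImage α (UTset m K) := by
  obtain ⟨a, ha, rfl⟩ := hx
  let k : Fin n := ⟨0, hn⟩
  refine ⟨Function.update a k (t • a k), forall_update_mem ha k (smul_mem_UTset t (ha k)), ?_⟩
  rw [← mlEvalMultilinear_apply, ← mlEvalMultilinear_apply, MultilinearMap.map_update_smul,
    Function.update_eq_self]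

theorem mlEval_update_one (k : Fin n) (X : Matrix (Fin m) (Fin m) K) :
    mlEval α (Function.update (fun _ => 1) k X) = (∑ σ, α σ) • X := by
  ext p q
  have h := mlEval_update_diagonal_apply α (fun _ _ => 1) k X p q
  simp only [diagonal_one] at h
  simp [h, psi, Function.comp_def, List.ofFn_const, List.prod_replicate, mul_comm]

theorem UTset_subset_mlImage (hn : 0 < n) (hc : ∑ σ, α σ ≠ 0) :
    UTset m K ⊆ mlImage α (UTset m K) := by
  intro X hX
  have h1 : (1 : Matrix (Fin m) (Fin m) K) ∈ UTset m K := by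
    simpa using diagonal_mem_UTset (fun _ => (1 : K))
  refine ⟨Function.update (fun _ => 1) ⟨0, hn⟩ ((∑ σ, α σ)⁻¹ • X),
    forall_update_mem (fun _ => h1) _ (smul_mem_UTset _ hX), ?_⟩
  rw [mlEval_update_one, smul_smul, mul_inv_cancel₀ hc, one_smul]

theorem Jset_one_subset_mlImage (k : Fin n) (D : Fin m → Fin n → K)
    (hD : ∀ p q, p < q → psi α k (D p) (D q) ≠ 0) :
    Jset m K 1 ⊆ mlImage α (UTset m K) := by
  intro B hB
  let N : Matrix (Fin m) (Fin m) K := of fun p q => B p q / psi α k (D p) (D q)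
  have hN : N ∈ UTset m K := fun p q hqp => by
    simp [N, hB p q (by omega)]
  refine ⟨Function.update (fun i => diagonal fun p => D p i) k N,
    forall_update_mem (fun i => diagonal_mem_UTset _) k hN, ?_⟩
  ext p q
  rw [mlEval_update_diagonal_apply]
  rcases lt_or_ge p q with hpq | hqp
  · simp [N, div_mul_cancel₀ _ (hD p q hpq)]
  · simp [N, hB p q (by omega)]

end Field

theorem exists_forall_psi_ne_zero {K : Type*} [Field K] [Infinite K] {n : ℕ}
    {α : Equiv.Perm (Fin n) → K} {k : Fin n} {d e : Fin n → K} (h : psi α k d e ≠ 0) (m : ℕ) :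
    ∃ D : Fin m → Fin n → K, ∀ p q, p ≠ q → psi α k (D p) (D q) ≠ 0 := by
  let P : Fin m → Fin m → MvPolynomial (Fin m × Fin n) K := fun p q =>
    psi α k (fun i => MvPolynomial.X (p, i)) (fun i => MvPolynomial.X (q, i))
  have eval_P : ∀ v p q,
      MvPolynomial.eval v (P p q) = psi α k (fun i => v (p, i)) (fun i => v (q, i)) := by
    intro v p q
    rw [← MvPolynomial.coe_aeval_eq_eval]
    change MvPolynomial.aeval v (psi α k _ _) = _
    rw [map_psi]
    simp [Function.comp_def]
  have hP : ∀ p q, p ≠ q → P p q ≠ 0 := by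
    intro p q hpq hP0
    have := eval_P (fun x => if x.1 = p then d x.2 else e x.2) p q
    simp only [hP0, map_zero, ↓reduceIte, hpq.symm] at this
    exact h this.symm
  obtain ⟨v, hv⟩ : ∃ v, MvPolynomial.eval v (∏ pq ∈ Finset.univ.offDiag, P pq.1 pq.2) ≠ 0 := by
    by_contra! H
    refine Finset.prod_ne_zero_iff.2 (fun pq hpq => hP _ _ (Finset.mem_offDiag.1 hpq).2.2)
      (MvPolynomial.funext fun v => by rw [H v, map_zero])
  refine ⟨fun p i => v (p, i), fun p q hpq => ?_⟩
  rw [map_prod, Finset.prod_ne_zero_iff] at hv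
  simpa [eval_P] using hv (p, q) (by simp [hpq])

theorem eq_of_mem_Jset_three_two {R : Type*} [Ring R] {A B : Matrix (Fin 3) (Fin 3) R}
    (hA : A ∈ Jset 3 R 2) (hB : B ∈ Jset 3 R 2) (h : A 0 2 = B 0 2) : A = B := by
  ext i j
  by_cases hij : (j : ℕ) < i + 2
  · rw [hA i j hij, hB i j hij]
  · obtain rfl : i = 0 := by omega
    obtain rfl : j = 2 := by omega
    exact h

theorem eq_zero_or_eq_Jset_three_two {K : Type*} [Field K] {S : Set (Matrix (Fin 3) (Fin 3) K)}
    (hS : S ⊆ Jset 3 K 2) (hsmul : ∀ x ∈ S, ∀ t : K, t • x ∈ S) (hne : S.Nonempty) :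
    S = {0} ∨ S = Jset 3 K 2 := by
  by_cases h : ∃ x ∈ S, x ≠ 0
  · obtain ⟨x, hxS, hx0⟩ := h
    have hx : x 0 2 ≠ 0 := fun h02 =>
      hx0 (eq_of_mem_Jset_three_two (hS hxS) (fun _ _ _ => rfl) h02)
    refine Or.inr (hS.antisymm fun B hB => ?_)
    convert hsmul x hxS (B 0 2 / x 0 2)
    exact eq_of_mem_Jset_three_two hB (smul_mem_Jset _ (hS hxS)) (by simp [div_mul_cancel₀ _ hx])
  · push Not at h
    obtain ⟨y, hy⟩ := hne
    refine Or.inl (Set.eq_singleton_iff_unique_mem.2 ⟨?_, h⟩)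
    simpa using hsmul y hy 0

theorem stmt_11 {K : Type*} [Field K] [Infinite K] {n : ℕ} (hn : 0 < n)
    (α : Equiv.Perm (Fin n) → K) :
    mlImage α (UTset 3 K) = {0} ∨ mlImage α (UTset 3 K) = Jset 3 K 2 ∨
      mlImage α (UTset 3 K) = Jset 3 K 1 ∨
      mlImage α (UTset 3 K) = UTset 3 K := by
  by_cases hc : ∑ σ, α σ = 0
  · by_cases hψ : ∃ (k : Fin n) (d e : Fin n → K), psi α k d e ≠ 0
    · obtain ⟨k, d, e, h⟩ := hψ
      obtain ⟨D, hD⟩ := exists_forall_psi_ne_zero h 3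
      exact Or.inr <| Or.inr <| Or.inl <| (mlImage_subset_Jset_one α hc).antisymm
        (Jset_one_subset_mlImage α k D fun p q hpq => hD p q hpq.ne)
    · push Not at hψ
      have hne : (mlImage α (UTset 3 K)).Nonempty :=
        ⟨_, fun _ => 0, fun _ _ _ _ => rfl, rfl⟩
      rcases eq_zero_or_eq_Jset_three_two (mlImage_subset_Jset_two α hc hψ)
        (fun x hx t => smul_mem_mlImage α hn hx t) hne with h | h
      · exact Or.inl h
      · exact Or.inr (Or.inl h)
  · exact Or.inr <| Or.inr <| Or.inr <|
      (mlImage_subset_UTset α).antisymm (UTset_subset_mlImage α hn hc)
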